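/- Let s = 0 and κ ∈ ℂ with κ ≠ 0, and let σ, σ̃ : ℝ → ℂ be twice differentiable functions. Suppose R : ℝ → Matrix (Fin 3) (Fin 3) ℂ is differentiable, R(x) is unit lower triangular for every x, and R'(x) + R(x)·F(σ̃)(x) = F(σ)(x)·R(x) for all x ∈ ℝ. Then (σ − σ̃)''(x) = 0 for all x ∈ ℝ; consequently σ − σ̃ is an affine function x ↦ c₁x + c₂. -/

import Mathlib

/-- The matrix F(σ) associated with the differential expression
ℓ_{σ,s,κ}(y) = y''' + s(σ'y)' + sσ'y' + κσ''y. -/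
noncomputable def Fmat (s κ : ℂ) (σ : ℝ → ℂ) (x : ℝ) : Matrix (Fin 3) (Fin 3) ℂ :=
  !![ -(s + κ) * σ x, 1, 0;
      -(3 * κ ^ 2 / 2 + s ^ 2 / 2 + 2 * κ * s) * σ x ^ 2, 2 * κ * σ x, 1;
      κ * (κ ^ 2 - s ^ 2) * σ x ^ 3,
        -(3 * κ ^ 2 / 2 + s ^ 2 / 2 - 2 * κ * s) * σ x ^ 2, (s - κ) * σ x ]

/-- A 3×3 matrix is unit lower triangular if its diagonal entries are 1 and the
entries above the diagonal are 0. -/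
def UnitLowerTriangular (A : Matrix (Fin 3) (Fin 3) ℂ) : Prop :=
  (∀ i, A i i = 1) ∧ ∀ i j : Fin 3, i < j → A i j = 0

/-- Key step of the uniqueness theorem for s = 0, κ ≠ 0: if R is a differentiable
unit lower triangular matrix function satisfying R' + R·F(σ̃) = F(σ)·R with σ, σ̃
twice differentiable, then (σ − σ̃)'' = 0, so σ − σ̃ is an affine function. -/
theorem sigma_diff_affine_of_s_eq_zero (s : ℂ) (hs : s = 0) (κ : ℂ) (hκ : κ ≠ 0)
    (σ σtil : ℝ → ℂ)
    (hσ1 : Differentiable ℝ σ) (hσ2 : Differentiable ℝ (deriv σ))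
    (hσtil1 : Differentiable ℝ σtil) (hσtil2 : Differentiable ℝ (deriv σtil))
    (R R' : ℝ → Matrix (Fin 3) (Fin 3) ℂ)
    (hR : ∀ (x : ℝ) (i j : Fin 3), HasDerivAt (fun t => R t i j) (R' x i j) x)
    (hTri : ∀ x : ℝ, UnitLowerTriangular (R x))
    (heq : ∀ x : ℝ, R' x + R x * Fmat s κ σtil x = Fmat s κ σ x * R x) :
    (∀ x : ℝ, deriv (deriv (fun t => σ t - σtil t)) x = 0)
    ∧ ∃ c₁ c₂ : ℂ, ∀ x : ℝ, σ x - σtil x = c₁ * x + c₂ := by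
  subst hs
  have h00 : ∀ x, R x 0 0 = 1 := fun x => (hTri x).1 0
  have h11 : ∀ x, R x 1 1 = 1 := fun x => (hTri x).1 1
  have h22 : ∀ x, R x 2 2 = 1 := fun x => (hTri x).1 2
  have h01 : ∀ x, R x 0 1 = 0 := fun x => (hTri x).2 0 1 (by decide)
  have h02 : ∀ x, R x 0 2 = 0 := fun x => (hTri x).2 0 2 (by decide)
  have h12 : ∀ x, R x 1 2 = 0 := fun x => (hTri x).2 1 2 (by decide)
  have hR'00 : ∀ x, R' x 0 0 = 0 := by
    intro x
    refine (hR x 0 0).unique ?_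
    have h : (fun t => R t 0 0) = fun _ => (1 : ℂ) := funext h00
    rw [h]; exact hasDerivAt_const x 1
  have hR'22 : ∀ x, R' x 2 2 = 0 := by
    intro x
    refine (hR x 2 2).unique ?_
    have h : (fun t => R t 2 2) = fun _ => (1 : ℂ) := funext h22
    rw [h]; exact hasDerivAt_const x 1
  -- (0,0) entry gives R x 1 0
  have ha : ∀ x, R x 1 0 = κ * (σ x - σtil x) := by
    intro x
    have e := congr_fun (congr_fun (heq x) 0) 0
    simp [Fmat, Matrix.add_apply, Matrix.mul_apply, Fin.sum_univ_three, h00, h01, h02,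
      hR'00] at e
    linear_combination -e
  -- (2,2) entry gives R x 2 1
  have hb : ∀ x, R x 2 1 = -(κ * (σ x - σtil x)) := by
    intro x
    have e := congr_fun (congr_fun (heq x) 2) 2
    simp [Fmat, Matrix.add_apply, Matrix.mul_apply, Fin.sum_univ_three, h22, h02, h12,
      hR'22] at e
    linear_combination e
  have hR'10 : ∀ x, R' x 1 0 = κ * (deriv σ x - deriv σtil x) := by
    intro x
    refine (hR x 1 0).unique ?_
    have h : (fun t => R t 1 0) = fun t => κ * (σ t - σtil t) := funext ha
    rw [h]
    exact (((hσ1 x).hasDerivAt.sub (hσtil1 x).hasDerivAt).const_mul κ)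
  -- (1,0) entry gives R x 2 0
  have hc : ∀ x, R x 2 0
      = κ * (deriv σ x - deriv σtil x) - κ ^ 2 / 2 * (σ x - σtil x) ^ 2 := by
    intro x
    have e := congr_fun (congr_fun (heq x) 1) 0
    simp [Fmat, Matrix.add_apply, Matrix.mul_apply, Fin.sum_univ_three, h00, h11, h12] at e
    rw [ha x, hR'10 x] at e
    linear_combination -e
  have hR'20 : ∀ x, R' x 2 0
      = κ * (deriv (deriv σ) x - deriv (deriv σtil) x)
        - κ ^ 2 * (σ x - σtil x) * (deriv σ x - deriv σtil x) := by
    intro x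
    refine (hR x 2 0).unique ?_
    have h : (fun t => R t 2 0)
        = fun t => κ * (deriv σ t - deriv σtil t) - κ ^ 2 / 2 * (σ t - σtil t) ^ 2 :=
      funext hc
    rw [h]
    have h1 : HasDerivAt (fun t => κ * (deriv σ t - deriv σtil t))
        (κ * (deriv (deriv σ) x - deriv (deriv σtil) x)) x :=
      (((hσ2 x).hasDerivAt.sub (hσtil2 x).hasDerivAt).const_mul κ)
    have h0 := ((hσ1 x).hasDerivAt.fun_sub (hσtil1 x).hasDerivAt)
    have h2 : HasDerivAt (fun t => (σ t - σtil t) ^ 2)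
        (2 * (σ x - σtil x) * (deriv σ x - deriv σtil x)) x := by
      have h3 := h0.fun_mul h0
      have h4 : (fun t => (σ t - σtil t) * (σ t - σtil t))
          = fun t => (σ t - σtil t) ^ 2 := by funext t; ring
      rw [h4] at h3
      exact h3.congr_deriv (by ring)
    have := h1.fun_sub (h2.const_mul (κ ^ 2 / 2))
    convert this using 1
    ring
  -- (2,0) entry gives the key identity
  have key : ∀ x : ℝ, deriv (deriv (fun t => σ t - σtil t)) x = 0 := by
    intro x
    have hds : deriv (fun t => σ t - σtil t) = fun y => deriv σ y - deriv σtil y :=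
      funext fun y => deriv_sub (hσ1 y) (hσtil1 y)
    rw [hds, deriv_fun_sub (hσ2 x) (hσtil2 x)]
    have e := congr_fun (congr_fun (heq x) 2) 0
    simp [Fmat, Matrix.add_apply, Matrix.mul_apply, Fin.sum_univ_three, h00, h22] at e
    rw [ha x, hb x, hc x, hR'20 x] at e
    have hk : κ * (deriv (deriv σ) x - deriv (deriv σtil) x) = 0 := by
      linear_combination e
    rcases mul_eq_zero.mp hk with h | h
    · exact absurd h hκ
    · exact h
  refine ⟨key, deriv (fun t => σ t - σtil t) 0, σ 0 - σtil 0, ?_⟩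
  have hds : deriv (fun t => σ t - σtil t) = fun y => deriv σ y - deriv σtil y :=
    funext fun y => deriv_sub (hσ1 y) (hσtil1 y)
  have hd2 : Differentiable ℝ (deriv (fun t => σ t - σtil t)) := by
    rw [hds]; exact hσ2.sub hσtil2
  set c₁ := deriv (fun t => σ t - σtil t) 0 with hc₁
  have hconst : ∀ x, deriv (fun t => σ t - σtil t) x = c₁ := fun x =>
    is_const_of_deriv_eq_zero hd2 key x 0
  have hgd : ∀ x : ℝ, HasDerivAt (fun t : ℝ => σ t - σtil t - c₁ * t) 0 x := by
    intro x
    have hcoe : HasDerivAt (fun t : ℝ => (t : ℂ)) 1 x := by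
      exact Complex.ofRealCLM.hasDerivAt (x := x)
    have h1 : HasDerivAt (fun t : ℝ => σ t - σtil t)
        (deriv σ x - deriv σtil x) x :=
      (hσ1 x).hasDerivAt.sub (hσtil1 x).hasDerivAt
    have h2 := h1.sub (hcoe.const_mul c₁)
    have hval : deriv σ x - deriv σtil x - c₁ * 1 = 0 := by
      have h5 : deriv σ x - deriv σtil x = c₁ := by
        have h6 := hconst x
        rw [hds] at h6
        simpa using h6
      rw [mul_one, h5]
      ring
    rwa [hval] at h2
  have hg : ∀ x : ℝ, σ x - σtil x - c₁ * x = σ 0 - σtil 0 - c₁ * (0 : ℝ) := by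
    intro x
    exact is_const_of_deriv_eq_zero (fun y => (hgd y).differentiableAt)
      (fun y => (hgd y).deriv) x 0
  intro x
  have := hg x
  push_cast at this
  linear_combination this
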